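/- arXiv:2004.12093 — 2 statements merged into one kernel-verified Lean document; each statement's English description precedes it below -/
import Mathlib

section
/- Let m, n be positive integers and let λ ∈ Y_{m,n}. Then the n tuples sort(shift^j(λ)) for j = 0, 1, …, n−1 are pairwise distinct; that is, the set {sort(shift^j(λ)) : 0 ≤ j ≤ n−1} has cardinality exactly n. -/
/-- The constant `c_{m,n} = (mn-2)(n-1)/2` (natural subtraction and division agree with
the intended integer value for all positive `m, n`). -/
def cmn (m n : ℕ) : ℕ := (m * n - 2) * (n - 1) / 2

/-- Membership in `C_{m,n}`: tuples `(x₁,…,x_N)` with `x_i ∈ {0,…,n-1}` and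
`x₁+⋯+x_N ≡ c_{m,n} (mod n)`. -/
def memC (m n : ℕ) (x : Fin (m * n) → Fin n) : Prop :=
  ((∑ i, (x i : ℕ) : ℕ) : ZMod n) = (cmn m n : ZMod n)

/-- Membership in `Y_{m,n}`: the weakly decreasing tuples in `C_{m,n}`. -/
def memY (m n : ℕ) (x : Fin (m * n) → Fin n) : Prop :=
  memC m n x ∧ Antitone x

/-- The shift map: add `1` to every coordinate, reducing modulo `n`. -/
def shift {N n : ℕ} (x : Fin N → Fin n) : Fin N → Fin n :=
  fun i => ⟨((x i : ℕ) + 1) % n, Nat.mod_lt _ (x i).pos⟩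

/-- The weakly decreasing rearrangement of a tuple. -/
def sortDesc {N : ℕ} {α : Type*} [LinearOrder α] (x : Fin N → α) : Fin N → α :=
  fun i => x (Tuple.sort x i.rev)

/-!
If `sort (shiftᵃ λ) = sort (shiftᵇ λ)` with `a ≠ b`, the multiset of entries of `λ`, read in
`ZMod n`, is invariant under translation by `d = b - a`, hence by `g = gcd(d, n)`, a proper divisor
of `n`. The entries are then spread evenly over the `t = n / g ≥ 2` blocks `[qg, (q+1)g)`, which
pins the sum of the entries modulo `2t`: one gets `2 c_{m,n} - 2 ∑ λᵢ ≡ 2 (mod 2t)`, incompatible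
with `∑ λᵢ ≡ c_{m,n} (mod n)`.
-/

open Finset Function

lemma shift_iterate_natCast {N n : ℕ} (x : Fin N → Fin n) (k : ℕ) (i : Fin N) :
    ((shift^[k] x i : ℕ) : ZMod n) = ((x i : ℕ) : ZMod n) + k := by
  induction k with
  | zero => simp
  | succ k ih =>
    rw [iterate_succ_apply', shift, ZMod.natCast_mod, Nat.cast_add, ih]
    push_cast
    ring

lemma exists_perm_eq_comp_of_sortDesc_eq {N : ℕ} {α : Type*} [LinearOrder α] {x y : Fin N → α}
    (h : sortDesc x = sortDesc y) : ∃ σ : Equiv.Perm (Fin N), x = y ∘ σ := by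
  have hx : sortDesc x = x ∘ (Fin.revPerm.trans (Tuple.sort x)) := rfl
  have hy : sortDesc y = y ∘ (Fin.revPerm.trans (Tuple.sort y)) := rfl
  refine ⟨(Fin.revPerm.trans (Tuple.sort x)).symm.trans (Fin.revPerm.trans (Tuple.sort y)), ?_⟩
  ext i
  simpa using congrFun (hx.symm.trans (h.trans hy)) ((Fin.revPerm.trans (Tuple.sort x)).symm i)

lemma periodic_card_filter_of_eq_comp_add {ι G : Type*} [Fintype ι] [AddRightCancelSemigroup G]
    [DecidableEq G] {F : ι → G} {d : G} (σ : Equiv.Perm ι) (h : ∀ i, F i = F (σ i) + d) :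
    Periodic (fun c => #{i | F i = c}) d := by
  intro c
  have key : ∀ i, F i = c + d ↔ F (σ i) = c := fun i => by rw [h i, add_left_inj]
  simp only [key, card_filter]
  exact Equiv.sum_comp σ fun i => if F i = c then 1 else 0

lemma ZMod.periodic_natCast_gcd_val {n : ℕ} [NeZero n] {β : Type*} {f : ZMod n → β} {d : ZMod n}
    (h : Periodic f d) : Periodic f (Nat.gcd d.val n) := by
  have hbez : ((Nat.gcd d.val n : ℕ) : ZMod n) = Nat.gcdA d.val n • d := by
    have := congrArg (Int.cast : ℤ → ZMod n) (Nat.gcd_eq_gcd_ab d.val n)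
    push_cast [ZMod.natCast_self, ZMod.natCast_zmod_val] at this
    rw [this, zsmul_eq_mul]
    ring
  rw [hbez]
  exact h.zsmul _

lemma Finset.sum_range_mul_eq_sum_sum {M : Type*} [AddCommMonoid M] (f : ℕ → M) (g t : ℕ) :
    ∑ v ∈ range (g * t), f v = ∑ q ∈ range t, ∑ r ∈ range g, f (q * g + r) := by
  induction t with
  | zero => simp
  | succ t ih => rw [Nat.mul_succ, sum_range_add, sum_range_succ, ih, mul_comm g t]

lemma Function.Periodic.mul_add_eq {α : Type*} {f : ℕ → α} {g : ℕ} (hf : Periodic f g)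
    (q r : ℕ) : f (q * g + r) = f r := by
  rw [add_comm]
  exact hf.nat_mul q r

lemma Function.Periodic.sum_range_mul {M : Type*} [AddCommMonoid M] {f : ℕ → M} {g : ℕ}
    (hf : Periodic f g) (t : ℕ) : ∑ v ∈ range (g * t), f v = t • ∑ r ∈ range g, f r := by
  simp [Finset.sum_range_mul_eq_sum_sum, hf.mul_add_eq]

lemma Function.Periodic.sum_range_mul_mul {f : ℕ → ℕ} {g : ℕ} (hf : Periodic f g) (t : ℕ) :
    ∑ v ∈ range (g * t), v * f v
      = g * (∑ q ∈ range t, q) * ∑ r ∈ range g, f r + t * ∑ r ∈ range g, r * f r := by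
  simp only [Finset.sum_range_mul_eq_sum_sum, hf.mul_add_eq, add_mul, sum_add_distrib, sum_const,
    card_range, smul_eq_mul, mul_sum, sum_mul]
  rw [sum_comm]
  congr 1
  exact sum_congr rfl fun _ _ => sum_congr rfl fun _ _ => by ring

lemma ZMod.sum_comp_val_eq_sum_range_card_smul {ι M : Type*} [Fintype ι] [AddCommMonoid M]
    {n : ℕ} [NeZero n] (F : ι → ZMod n) (φ : ℕ → M) :
    ∑ i, φ (F i).val = ∑ v ∈ range n, #{i | F i = v} • φ v := by
  rw [← sum_fiberwise_of_maps_to' (t := range n) (fun i _ => mem_range.2 (F i).val_lt)]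
  refine sum_congr rfl fun v hv => ?_
  rw [sum_const]
  congr 2
  ext i
  simp only [mem_filter, mem_univ, true_and]
  constructor
  · rintro rfl
    exact (ZMod.natCast_zmod_val _).symm
  · rintro h
    rw [h, ZMod.val_natCast_of_lt (mem_range.1 hv)]

lemma two_mul_cmn {m n : ℕ} (hm : 0 < m) (hn : 0 < n) :
    (2 * cmn m n : ℤ) = (m * n - 2) * (n - 1) := by
  obtain hmn | hmn := lt_or_ge (m * n) 2
  · obtain ⟨rfl, rfl⟩ := mul_eq_one.1 (show m * n = 1 by have := Nat.mul_pos hm hn; omega)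
    simp [cmn]
  have heven : 2 ∣ (m * n - 2) * (n - 1) := by
    rcases Nat.even_or_odd n with ⟨j, rfl⟩ | ⟨j, rfl⟩
    · exact Dvd.dvd.mul_right (by rw [mul_add]; omega) _
    · exact Dvd.dvd.mul_left (by omega) _
  rw [cmn, ← Nat.cast_two, ← Nat.cast_mul, Nat.mul_div_cancel' heven]
  push_cast [hmn, hn]
  ring

lemma not_modEq_cmn {m g t R S : ℕ} (hm : 0 < m) (hg : 0 < g) (ht : 1 < t)
    (hS : S = g * (∑ q ∈ range t, q) * (m * g) + t * R) : ¬ S ≡ cmn m (g * t) [MOD g * t] := by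
  intro hmod
  obtain ⟨k, hk⟩ := Int.even_mul_pred_self g
  have hgauss : (∑ q ∈ range t, (q : ℤ)) * 2 = t * (t - 1) := by
    have := sum_range_id_mul_two t
    zify [show 1 ≤ t by omega] at this
    exact this
  have h2c := two_mul_cmn hm (Nat.mul_pos hg (by omega : 0 < t))
  -- the evenness of `g (g - 1)` is what cancels the `m g² t (t - 1)` terms modulo `2t`
  have hid : (2 * cmn m (g * t) : ℤ) - 2 * S = 2 - 2 * t * (R + g - m * k) := by
    rw [hS]
    push_cast at h2c ⊢
    linear_combination h2c - m * g * g * hgauss + m * t * hk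
  have hdvd : (2 * t : ℤ) ∣ 2 * cmn m (g * t) - 2 * S := by
    rw [← mul_sub]
    exact dvd_trans (mul_dvd_mul_left 2 (by exact_mod_cast dvd_mul_left t g))
      (mul_dvd_mul_left 2 (Nat.modEq_iff_dvd.1 hmod))
  have htwo : (2 * t : ℤ) ∣ 2 := by
    simpa [hid] using dvd_add hdvd (dvd_mul_right (2 * t : ℤ) (R + g - m * k))
  have := Int.le_of_dvd two_pos htwo
  omega

lemma not_memC_of_periodic {m n g : ℕ} (hm : 0 < m) {l : Fin (m * n) → Fin n} (hg : g ∣ n)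
    (hgn : g < n) (hper : Periodic (fun c : ZMod n => #{i | ((l i : ℕ) : ZMod n) = c}) g) :
    ¬ memC m n l := by
  obtain ⟨t, rfl⟩ := hg
  have hg0 : 0 < g := Nat.pos_of_ne_zero (by rintro rfl; simp at hgn)
  have ht : 1 < t := Nat.lt_of_mul_lt_mul_left (by simpa using hgn)
  have : NeZero (g * t) := ⟨by positivity⟩
  set F : Fin (m * (g * t)) → ZMod (g * t) := fun i => ((l i : ℕ) : ZMod (g * t))
  have hcnt : Periodic (fun v : ℕ => #{i | F i = v}) g := fun v => by
    simpa only [Nat.cast_add] using hper v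
  have hval : ∀ i, (F i).val = l i := fun i => ZMod.val_natCast_of_lt (l i).isLt
  have hP : ∑ r ∈ range g, #{i | F i = r} = m * g := by
    have := ZMod.sum_comp_val_eq_sum_range_card_smul F fun _ => 1
    simp only [sum_const, card_univ, Fintype.card_fin, smul_eq_mul, mul_one,
      hcnt.sum_range_mul t] at this
    exact Nat.eq_of_mul_eq_mul_left (show 0 < t by omega) (by rw [← this]; ring)
  have hS : ∑ i, (l i : ℕ)
      = g * (∑ q ∈ range t, q) * (m * g) + t * ∑ r ∈ range g, r * #{i | F i = r} := by
    have := ZMod.sum_comp_val_eq_sum_range_card_smul F id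
    simp only [id, hval, smul_eq_mul] at this
    rw [this, sum_congr rfl fun v _ => mul_comm _ _, hcnt.sum_range_mul_mul, hP]
  intro hC
  exact not_modEq_cmn hm hg0 ht hS ((ZMod.natCast_eq_natCast_iff _ _ _).1 hC)

theorem sort_shift_injective_general (m n : ℕ) (hm : 0 < m)
    (l : Fin (m * n) → Fin n) (hl : memY m n l) :
    Function.Injective (fun j : Fin n => sortDesc (shift^[(j : ℕ)] l)) := by
  rcases le_or_gt n 1 with hn | hn
  · have := Fin.subsingleton_iff_le_one.2 hn
    exact injective_of_subsingleton _
  have : NeZero n := ⟨by omega⟩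
  intro a b hab
  obtain ⟨σ, hσ⟩ := exists_perm_eq_comp_of_sortDesc_eq hab
  have hF : ∀ i, ((l i : ℕ) : ZMod n) = ((l (σ i) : ℕ) : ZMod n) + ((b : ℕ) - (a : ℕ)) := by
    intro i
    have := congrArg (fun z : Fin n => ((z : ℕ) : ZMod n)) (congrFun hσ i)
    simp only [comp_apply, shift_iterate_natCast] at this
    linear_combination this
  by_contra hne
  set d : ZMod n := (b : ℕ) - (a : ℕ)
  have hd : d.val ≠ 0 := by
    rw [ne_eq, ZMod.val_eq_zero, sub_eq_zero, ZMod.natCast_eq_natCast_iff',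
      Nat.mod_eq_of_lt b.isLt, Nat.mod_eq_of_lt a.isLt]
    exact fun h => hne (Fin.ext h).symm
  exact not_memC_of_periodic hm (Nat.gcd_dvd_right _ _)
    ((Nat.gcd_le_left _ (Nat.pos_of_ne_zero hd)).trans_lt d.val_lt)
    (ZMod.periodic_natCast_gcd_val (periodic_card_filter_of_eq_comp_add σ hF)) hl.1

/-- For `λ ∈ Y_{m,n}`, the `n` tuples `sort(shiftʲ(λ))`, `0 ≤ j ≤ n-1`, are pairwise
distinct; i.e. the set of these tuples has cardinality exactly `n`. -/
theorem sort_shift_injective (m n : ℕ) (hm : 0 < m) (hn : 0 < n)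
    (l : Fin (m * n) → Fin n) (hl : memY m n l) :
    Function.Injective (fun j : Fin n => sortDesc (shift^[(j : ℕ)] l)) :=
  sort_shift_injective_general m n hm l hl
end

section
/- Let n ≥ 2 and let x = (x_1,…,x_n) be a tuple with each x_i ∈ {0,…,n−1} and x_1 + ⋯ + x_n ≡ (n−1)(n−2)/2 (mod n). Then there exists exactly one j ∈ {0, 1, …, n−1} such that the coordinate sum of shift^j(x) equals (n−1)(n−2)/2 and sort(shift^j(x)) is dominated by δ_n. -/
/-- The tuple `δ_n = (n-2, n-3, …, 1, 0, 0)`: its `i`-th coordinate (0-indexed) is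
`n - 2 - i` (natural subtraction). -/
def deltaTuple (n : ℕ) : Fin n → ℕ := fun i => n - 2 - (i : ℕ)

/-- A tuple `μ` of length `n` is dominated by `δ_n` if all its partial sums are bounded
by the corresponding partial sums of `δ_n`. -/
def dominatedByDelta (n : ℕ) (l : Fin n → ℕ) : Prop :=
  ∀ k : ℕ, k ≤ n →
    ∑ i ∈ Finset.univ.filter (fun i : Fin n => (i : ℕ) < k), l i ≤
      ∑ i ∈ Finset.univ.filter (fun i : Fin n => (i : ℕ) < k), deltaTuple n i

/-- The shift map: add `1` to every coordinate and reduce modulo `n` so as to lie in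
`{0,…,n-1}`. -/
def shiftMod (n : ℕ) {N : ℕ} (x : Fin N → ℕ) : Fin N → ℕ :=
  fun i => (x i + 1) % n

/-!
Write `B k` for the `k`-th partial sum of `δ_n`, so that `B n = (n-1)(n-2)/2`. Rotating a tuple
`y` with entries in `{0,…,n-1}` by `d` wraps exactly the entries `≥ n - d`; its sum is unchanged
iff exactly `d` entries wrap, and these are then the `d` largest entries.

Uniqueness: if `y` and its rotation by `0 < d < n` both had sum `B n` and dominated sorted tuples,
the wrapped entries of `y` would sum to at most `B d` and the other entries, raised by `d`, to at
most `B (n - d)`; but `B d + B (n - d) + 1 = B n + d (n - d)`.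

Existence: the sums of the rotations of `x` are all `≡ B n (mod n)`, have average `B n + n - 1`
and grow by at most `n` per step, so one of them is `B n`. Among those rotations take one with the
least sum of squares. If its sorted tuple were not dominated, let `K` be the first index where the
excess of its partial sums over those of `δ_n` is maximal: then its `K` largest entries are exactly
those `≥ n - K`, and the rotation by `K` keeps the sum while lowering the sum of squares.
-/

open Finset

section PrefixSum

variable {n : ℕ}

def prefixSum (f : Fin n → ℕ) (k : ℕ) : ℕ :=
  ∑ i ∈ univ.filter (fun i : Fin n => (i : ℕ) < k), f i

lemma dominatedByDelta_iff (l : Fin n → ℕ) :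
    dominatedByDelta n l ↔ ∀ k ≤ n, prefixSum l k ≤ prefixSum (deltaTuple n) k :=
  Iff.rfl

@[simp]
lemma prefixSum_zero (f : Fin n → ℕ) : prefixSum f 0 = 0 := by
  simp [prefixSum]

lemma prefixSum_succ (f : Fin n → ℕ) {k : ℕ} (hk : k < n) :
    prefixSum f (k + 1) = prefixSum f k + f ⟨k, hk⟩ := by
  have : univ.filter (fun i : Fin n => (i : ℕ) < k + 1) =
      insert ⟨k, hk⟩ (univ.filter fun i : Fin n => (i : ℕ) < k) := by
    ext i
    simp only [mem_filter, mem_univ, true_and, mem_insert, Fin.ext_iff]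
    omega
  rw [prefixSum, this, sum_insert (by simp), add_comm]
  rfl

lemma prefixSum_of_le (f : Fin n → ℕ) {k : ℕ} (hk : n ≤ k) : prefixSum f k = ∑ i, f i := by
  rw [prefixSum, filter_true_of_mem fun i _ => i.isLt.trans_le hk]

lemma two_mul_prefixSum_deltaTuple {k : ℕ} (hk : k + 1 ≤ n) :
    2 * prefixSum (deltaTuple n) k + k * (k + 3) = 2 * n * k := by
  induction k with
  | zero => simp
  | succ k ih =>
    rw [prefixSum_succ _ (by omega), deltaTuple]
    have := ih (by omega)
    have : n - 2 - k + k + 2 = n := by omega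
    linarith

lemma prefixSum_deltaTuple_self (hn : 1 ≤ n) :
    2 * prefixSum (deltaTuple n) n + 3 * n = n * n + 2 := by
  obtain ⟨m, rfl⟩ : ∃ m, n = m + 1 := ⟨n - 1, by omega⟩
  have := two_mul_prefixSum_deltaTuple (n := m + 1) (k := m) le_rfl
  rw [prefixSum_succ _ (by omega), deltaTuple]
  simp only [Nat.sub_sub, show m + 1 - (2 + m) = 0 by omega]
  linarith

lemma prefixSum_deltaTuple_self_eq (hn : 2 ≤ n) :
    prefixSum (deltaTuple n) n = (n - 1) * (n - 2) / 2 := by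
  have := prefixSum_deltaTuple_self (n := n) (by omega)
  obtain ⟨m, rfl⟩ : ∃ m, n = m + 2 := ⟨n - 2, by omega⟩
  simp only [Nat.add_sub_cancel, show m + 2 - 1 = m + 1 by omega]
  exact (Nat.div_eq_of_eq_mul_left two_pos (by linarith)).symm

end PrefixSum

section Sorting

variable {n : ℕ}

lemma sum_comp_sortDesc {α M : Type*} [LinearOrder α] [AddCommMonoid M] (x : Fin n → α)
    (h : α → M) : ∑ i, h (sortDesc x i) = ∑ i, h (x i) :=
  Equiv.sum_comp (Fin.revPerm.trans (Tuple.sort x)) (h ∘ x)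

lemma antitone_sortDesc {α : Type*} [LinearOrder α] (x : Fin n → α) : Antitone (sortDesc x) :=
  fun _ _ hij => Tuple.monotone_sort x (Fin.rev_le_rev.mpr hij)

lemma card_filter_le_sortDesc (y : Fin n → ℕ) (c : ℕ) :
    #{i | c ≤ sortDesc y i} = #{i | c ≤ y i} := by
  simpa only [card_filter] using sum_comp_sortDesc y fun t => if c ≤ t then 1 else 0

lemma filter_le_sortDesc (y : Fin n → ℕ) (c : ℕ) :
    univ.filter (fun i => c ≤ sortDesc y i) =
      univ.filter (fun i : Fin n => (i : ℕ) < #{i | c ≤ y i}) := by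
  ext i
  rw [← card_filter_le_sortDesc, mem_filter, mem_filter,
    Fin.lt_card_filter_univ_iff_apply_of_imp _ fun i j hji hi => hi.trans (antitone_sortDesc y hji)]

lemma prefixSum_sortDesc (y : Fin n → ℕ) (c : ℕ) :
    prefixSum (sortDesc y) #{i | c ≤ y i} = ∑ i ∈ {i | c ≤ y i}, y i := by
  rw [prefixSum, ← filter_le_sortDesc, sum_filter, sum_filter]
  exact sum_comp_sortDesc y fun t => if c ≤ t then t else 0

end Sorting

section Rotation

variable {n d : ℕ}

lemma add_mod_add_ite {a : ℕ} (ha : a < n) (hd : d ≤ n) :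
    (a + d) % n + (if n - d ≤ a then n else 0) = a + d := by
  split_ifs with h
  · rw [Nat.mod_eq_sub_mod (by omega), Nat.mod_eq_of_lt (by omega)]
    omega
  · rw [Nat.mod_eq_of_lt (by omega), add_zero]

lemma sq_add_mod_add_ite {a : ℕ} (ha : a < n) (hd : d ≤ n) :
    ((a + d) % n) ^ 2 + (if n - d ≤ a then 2 * n * (a + d) else 0) =
      (a + d) ^ 2 + (if n - d ≤ a then n ^ 2 else 0) := by
  have h := add_mod_add_ite ha hd
  generalize (a + d) % n = r at h ⊢
  split_ifs at h ⊢ <;> rw [← h] <;> ring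

variable {y : Fin n → ℕ}

lemma sum_add_mod_add_card (hy : ∀ i, y i < n) (hd : d ≤ n) :
    ∑ i, (y i + d) % n + n * #{i | n - d ≤ y i} = ∑ i, y i + n * d := by
  calc ∑ i, (y i + d) % n + n * #{i | n - d ≤ y i}
      = ∑ i, ((y i + d) % n + if n - d ≤ y i then n else 0) := by
        rw [sum_add_distrib, sum_ite, sum_const_zero, sum_const, smul_eq_mul, add_zero, mul_comm]
    _ = ∑ i, (y i + d) := sum_congr rfl fun i _ => add_mod_add_ite (hy i) hd
    _ = ∑ i, y i + n * d := by
        rw [sum_add_distrib, sum_const, card_univ, Fintype.card_fin, smul_eq_mul]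

lemma sum_sq_add_mod_add (hy : ∀ i, y i < n) (hd : d ≤ n) :
    ∑ i, ((y i + d) % n) ^ 2 + 2 * n * (∑ i ∈ {i | n - d ≤ y i}, y i + d * #{i | n - d ≤ y i}) =
      ∑ i, y i ^ 2 + 2 * d * ∑ i, y i + n * d ^ 2 + n ^ 2 * #{i | n - d ≤ y i} := by
  calc _ = ∑ i, (((y i + d) % n) ^ 2 + if n - d ≤ y i then 2 * n * (y i + d) else 0) := by
        rw [sum_add_distrib, sum_ite, sum_const_zero, add_zero, ← mul_sum, sum_add_distrib,
          sum_const, smul_eq_mul, mul_comm d]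
    _ = ∑ i, ((y i + d) ^ 2 + if n - d ≤ y i then n ^ 2 else 0) :=
        sum_congr rfl fun i _ => sq_add_mod_add_ite (hy i) hd
    _ = _ := by
        simp only [sum_add_distrib, sum_ite, sum_const_zero, add_zero, sum_const, smul_eq_mul,
          add_sq, ← sum_mul, ← mul_sum, card_univ, Fintype.card_fin]
        ring

lemma exists_least_argmax (F : ℕ → ℤ) (N : ℕ) :
    ∃ K ≤ N, (∀ m ≤ N, F m ≤ F K) ∧ ∀ m < K, F m < F K := by
  have hmax : ∃ K, K ≤ N ∧ ∀ m ≤ N, F m ≤ F K := by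
    obtain ⟨K, hK, hmax⟩ := exists_max_image (range (N + 1)) F nonempty_range_add_one
    exact ⟨K, Nat.lt_succ_iff.mp (mem_range.mp hK), fun m hm => hmax m (by simpa [Nat.lt_succ_iff])⟩
  refine ⟨Nat.find hmax, (Nat.find_spec hmax).1, (Nat.find_spec hmax).2, fun m hm => ?_⟩
  by_contra! hle
  exact Nat.find_min hmax hm ⟨by have := (Nat.find_spec hmax).1; omega,
    fun m' hm' => ((Nat.find_spec hmax).2 m' hm').trans hle⟩

lemma exists_level_set_of_not_dominated {g : Fin n → ℕ} (hg : Antitone g)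
    (hsum : ∑ i, g i = prefixSum (deltaTuple n) n) (hnd : ¬ dominatedByDelta n g) :
    ∃ K < n, prefixSum (deltaTuple n) K < prefixSum g K ∧
      ∀ i : Fin n, n - K ≤ g i ↔ (i : ℕ) < K := by
  set F : ℕ → ℤ := fun k => (prefixSum g k : ℤ) - prefixSum (deltaTuple n) k with hF
  have hstep : ∀ k (hk : k < n), F (k + 1) = F k + g ⟨k, hk⟩ - (n - 2 - k : ℕ) := by
    intro k hk
    simp only [hF, prefixSum_succ _ hk, deltaTuple]
    push_cast
    ring
  obtain ⟨K, hKN, hmax, hmin⟩ := exists_least_argmax F n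
  obtain ⟨k, hk, hlt⟩ : ∃ k ≤ n, prefixSum (deltaTuple n) k < prefixSum g k := by
    simpa [dominatedByDelta_iff] using hnd
  have hpos : 0 < F K := by have := hmax k hk; simp only [hF] at this ⊢; omega
  have hK0 : K ≠ 0 := by rintro rfl; simp [hF] at hpos
  have hKn : K ≠ n := by rintro rfl; simp [hF, prefixSum_of_le, hsum] at hpos
  have hlow : n - K ≤ g ⟨K - 1, by omega⟩ := by
    have h := hstep (K - 1) (by omega)
    rw [Nat.sub_add_cancel (by omega)] at h
    have := hmin (K - 1) (by omega)
    omega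
  have hhigh : g ⟨K, by omega⟩ < n - K := by
    have := hstep K (by omega)
    have := hmax (K + 1) (by omega)
    omega
  refine ⟨K, by omega, by simp only [hF] at hpos; omega, fun i => ⟨fun hi => ?_, fun hi => ?_⟩⟩
  · by_contra! hKi
    have := hg (show (⟨K, by omega⟩ : Fin n) ≤ i from hKi)
    omega
  · exact hlow.trans (hg (show i ≤ ⟨K - 1, by omega⟩ from Fin.le_def.mpr (by simp; omega)))

lemma exists_rotation_sum_sq_lt (hy : ∀ i, y i < n)
    (hsum : ∑ i, y i = prefixSum (deltaTuple n) n) (hnd : ¬ dominatedByDelta n (sortDesc y)) :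
    ∃ d < n, ∑ i, (y i + d) % n = ∑ i, y i ∧ ∑ i, ((y i + d) % n) ^ 2 < ∑ i, y i ^ 2 := by
  obtain ⟨K, hKn, hexcess, hlevel⟩ := exists_level_set_of_not_dominated (antitone_sortDesc y)
    ((sum_comp_sortDesc y id).trans hsum) hnd
  have hcard : #{i | n - K ≤ y i} = K := by
    rw [← card_filter_le_sortDesc]
    simp only [hlevel, Fin.card_filter_val_lt]
    omega
  have hwrap : prefixSum (deltaTuple n) K < ∑ i ∈ {i | n - K ≤ y i}, y i := by
    rw [← prefixSum_sortDesc, hcard]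
    exact hexcess
  have hrot := sum_add_mod_add_card hy hKn.le
  have hsq := sum_sq_add_mod_add hy hKn.le
  rw [hcard] at hrot hsq
  rw [hsum] at hsq
  have hK := two_mul_prefixSum_deltaTuple (n := n) (k := K) (by omega)
  have hN := prefixSum_deltaTuple_self (n := n) (by omega)
  refine ⟨K, hKn, by omega, ?_⟩
  linarith [Nat.mul_le_mul_left n hwrap, congrArg (K * ·) hN, congrArg (n * ·) hK]

lemma not_dominated_rotation (hy : ∀ i, y i < n)
    (hsum : ∑ i, y i = prefixSum (deltaTuple n) n) (hdom : dominatedByDelta n (sortDesc y))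
    {d : ℕ} (hd : 0 < d) (hdn : d < n) (hsum' : ∑ i, (y i + d) % n = ∑ i, y i) :
    ¬ dominatedByDelta n (sortDesc fun i => (y i + d) % n) := by
  intro hdom'
  have hcard : #{i | n - d ≤ y i} = d := by
    have := sum_add_mod_add_card hy hdn.le
    rw [hsum'] at this
    exact Nat.eq_of_mul_eq_mul_left (by omega) (Nat.add_left_cancel this)
  have hwrap : ∑ i ∈ {i | n - d ≤ y i}, y i ≤ prefixSum (deltaTuple n) d := by
    rw [← prefixSum_sortDesc, hcard]
    exact hdom d hdn.le
  have hlevel : univ.filter (fun i => d ≤ (y i + d) % n) =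
      univ.filter (fun i => ¬ n - d ≤ y i) := by
    ext i
    have h := add_mod_add_ite (hy i) hdn.le
    have := hy i
    simp only [mem_filter, mem_univ, true_and]
    split_ifs at h <;> omega
  have hstay :
      ∑ i ∈ {i | ¬ n - d ≤ y i}, y i + (n - d) * d ≤ prefixSum (deltaTuple n) (n - d) := by
    have hcard' : #{i | ¬ n - d ≤ y i} = n - d := by
      rw [filter_not, card_sdiff_of_subset (filter_subset _ _), hcard, card_univ, Fintype.card_fin]
    have htop := prefixSum_sortDesc (fun i => (y i + d) % n) d
    rw [hlevel, hcard'] at htop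
    have := (dominatedByDelta_iff _).mp hdom' (n - d) (by omega)
    rwa [htop, sum_congr rfl fun i hi => Nat.mod_eq_of_lt (by simp at hi; omega), sum_add_distrib,
      sum_const, smul_eq_mul, hcard'] at this
  have hsplit := sum_filter_add_sum_filter_not univ (fun i => n - d ≤ y i) y
  obtain ⟨e, rfl⟩ : ∃ e, n = d + e := ⟨n - d, by omega⟩
  have hD := two_mul_prefixSum_deltaTuple (n := d + e) (k := d) (by omega)
  have hE := two_mul_prefixSum_deltaTuple (n := d + e) (k := e) (by omega)
  have hN := prefixSum_deltaTuple_self (n := d + e) (by omega)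
  simp only [Nat.add_sub_cancel_left] at hwrap hsplit hstay
  linarith

end Rotation

lemma Nat.exists_eq_of_modEq_of_le_add {f : ℕ → ℕ} {c m : ℕ} (hmod : ∀ j, f j ≡ c [MOD m])
    (hstep : ∀ j, f (j + 1) ≤ f j + m) {a b : ℕ} (hab : a ≤ b) (ha : f a ≤ c) (hb : c ≤ f b) :
    ∃ j, f j = c := by
  induction b, hab using Nat.le_induction with
  | base => exact ⟨a, le_antisymm ha hb⟩
  | succ b _ ih =>
    by_cases h : c ≤ f b
    · exact ih h
    · exact ⟨b + 1, le_antisymm ((hmod _).le_of_lt_add (by linarith [hstep b])) hb⟩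

lemma sum_range_add_mod (n a : ℕ) [NeZero n] :
    ∑ j ∈ range n, (a + j) % n = ∑ j ∈ range n, j := by
  rw [sum_range, sum_range]
  exact Fintype.sum_equiv (Equiv.addLeft (Fin.ofNat n a)) _ _ fun j => by simp [Fin.val_add]

lemma exists_sum_add_mod_eq {n : ℕ} (hn : 2 ≤ n) {x : Fin n → ℕ}
    (hx : ((∑ i, x i : ℕ) : ZMod n) = (prefixSum (deltaTuple n) n : ZMod n)) :
    ∃ j < n, ∑ i, (x i + j) % n = prefixSum (deltaTuple n) n := by
  have : NeZero n := ⟨by omega⟩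
  set T := prefixSum (deltaTuple n) n
  set S : ℕ → ℕ := fun j => ∑ i, (x i + j) % n with hS
  have hmod : ∀ j, S j ≡ T [MOD n] := fun j => by
    rw [← ZMod.natCast_eq_natCast_iff, ← hx]
    simp [hS, sum_add_distrib]
  have hstep : ∀ j, S (j + 1) ≤ S j + n := fun j => by
    calc S (j + 1) ≤ ∑ i, ((x i + j) % n + 1) := sum_le_sum fun i _ => by
          rw [← add_assoc, ← Nat.mod_add_mod]
          exact Nat.mod_le _ _
      _ = S j + n := by simp [sum_add_distrib, hS]
  have hperiod : ∀ j q, S (j + n * q) = S j := fun j q => by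
    simp only [hS, ← add_assoc, Nat.add_mul_mod_self_left]
  have htotal : ∑ j ∈ range n, S j = ∑ j ∈ range n, (T + (n - 1)) := by
    have h2 := sum_range_id_mul_two n
    have h3 := prefixSum_deltaTuple_self (n := n) (by omega)
    rw [sum_comm, sum_const, card_range, smul_eq_mul]
    simp only [sum_range_add_mod, sum_const, card_univ, Fintype.card_fin, smul_eq_mul]
    obtain ⟨m, rfl⟩ : ∃ m, n = m + 1 := ⟨n - 1, by omega⟩
    simp only [Nat.add_sub_cancel] at h2 ⊢
    nlinarith
  obtain ⟨a, -, ha⟩ := exists_le_of_sum_le (nonempty_range_iff.mpr (by omega)) htotal.le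
  obtain ⟨b, -, hb⟩ := exists_le_of_sum_le (nonempty_range_iff.mpr (by omega)) htotal.ge
  have hab : a ≤ b + n * a := le_add_left (Nat.le_mul_of_pos_left a (by omega))
  obtain ⟨j, hj⟩ := Nat.exists_eq_of_modEq_of_le_add hmod hstep hab
    ((hmod a).le_of_lt_add (by omega)) (by rw [hperiod]; omega)
  exact ⟨j % n, Nat.mod_lt _ (by omega), by simpa only [hS, Nat.add_mod_mod] using hj⟩

lemma shiftMod_iterate {n : ℕ} {x : Fin n → ℕ} (hx : ∀ i, x i < n) (j : ℕ) :
    (shiftMod n)^[j] x = fun i => (x i + j) % n := by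
  induction j with
  | zero => exact funext fun i => (Nat.mod_eq_of_lt (hx i)).symm
  | succ j ih =>
    funext i
    rw [Function.iterate_succ_apply', ih]
    exact (Nat.mod_add_mod _ _ _).trans (by rw [add_assoc])

lemma add_mod_add_mod (a j d n : ℕ) : ((a + j) % n + d) % n = (a + (j + d) % n) % n := by
  rw [Nat.mod_add_mod, Nat.add_mod_mod, add_assoc]

lemma exists_rotation_dominated {n : ℕ} (hn : 2 ≤ n) {x : Fin n → ℕ}
    (hx : ((∑ i, x i : ℕ) : ZMod n) = (prefixSum (deltaTuple n) n : ZMod n)) :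
    ∃ j < n, ∑ i, (x i + j) % n = prefixSum (deltaTuple n) n ∧
      dominatedByDelta n (sortDesc fun i => (x i + j) % n) := by
  obtain ⟨j₀, hj₀, hsum₀⟩ := exists_sum_add_mod_eq hn hx
  obtain ⟨j, hj, hmin⟩ := exists_min_image
    ((range n).filter fun j => ∑ i, (x i + j) % n = prefixSum (deltaTuple n) n)
    (fun j => ∑ i, ((x i + j) % n) ^ 2) ⟨j₀, by simp [hj₀, hsum₀]⟩
  simp only [mem_filter, mem_range] at hj hmin
  refine ⟨j, hj.1, hj.2, by_contra fun hnd => ?_⟩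
  obtain ⟨d, -, hsum, hsq⟩ := exists_rotation_sum_sq_lt (fun i => Nat.mod_lt _ (by omega)) hj.2 hnd
  simp only [add_mod_add_mod] at hsum hsq
  exact (hmin _ ⟨Nat.mod_lt _ (by omega), hsum.trans hj.2⟩).not_gt hsq

lemma rotation_dominated_unique {n : ℕ} {x : Fin n → ℕ} {j j' : ℕ} (hjj' : j < j') (hj' : j' < n)
    (hgood : ∑ i, (x i + j) % n = prefixSum (deltaTuple n) n ∧
      dominatedByDelta n (sortDesc fun i => (x i + j) % n))
    (hgood' : ∑ i, (x i + j') % n = prefixSum (deltaTuple n) n ∧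
      dominatedByDelta n (sortDesc fun i => (x i + j') % n)) : False := by
  have hrot : ∀ i, ((x i + j) % n + (j' - j)) % n = (x i + j') % n := fun i => by
    rw [add_mod_add_mod, Nat.add_sub_cancel' hjj'.le, Nat.mod_eq_of_lt hj']
  refine not_dominated_rotation (fun i => Nat.mod_lt _ (by omega)) hgood.1 hgood.2
    (Nat.sub_pos_of_lt hjj') (by omega) ?_ ?_
  · simp only [hrot, hgood.1, hgood'.1]
  · simpa only [hrot] using hgood'.2

/-- If `x` is a tuple with entries in `{0,…,n-1}` and coordinate sum
`≡ (n-1)(n-2)/2 (mod n)`, then there is exactly one `j ∈ {0,…,n-1}` such that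
`shiftʲ(x)` has coordinate sum `(n-1)(n-2)/2` and `sort(shiftʲ(x))` is dominated
by `δ_n`. -/
theorem unique_shift_dominated (n : ℕ) (hn : 2 ≤ n) (x : Fin n → ℕ)
    (hx : ∀ i, x i < n)
    (hsum : ((∑ i, x i : ℕ) : ZMod n) = (((n - 1) * (n - 2) / 2 : ℕ) : ZMod n)) :
    ∃! j : ℕ, j < n ∧
      (∑ i, (shiftMod n)^[j] x i = (n - 1) * (n - 2) / 2 ∧
        dominatedByDelta n (sortDesc ((shiftMod n)^[j] x))) := by
  rw [← prefixSum_deltaTuple_self_eq hn] at hsum ⊢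
  simp only [shiftMod_iterate hx]
  obtain ⟨j, hj, hgood⟩ := exists_rotation_dominated hn hsum
  refine ⟨j, ⟨hj, hgood⟩, fun j' ⟨hj', hgood'⟩ => ?_⟩
  rcases lt_trichotomy j' j with h | h | h
  · exact (rotation_dominated_unique h hj hgood' hgood).elim
  · exact h
  · exact (rotation_dominated_unique h hj' hgood hgood').elim
end
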